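/- arXiv:2310.14830 — 2 statements merged into one kernel-verified Lean document; each statement's English description precedes it below -/
import Mathlib

section
/- For each j ∈ ℤ/nℤ with j ≠ 0 there exists k ∈ ℤ/nℤ such that ρ_j(x,y) ≥ σ_k(x,y) for all x, y in the closed Weyl chamber C̄. -/
open Real Finset

noncomputable section

/-- The Euclidean inner product on `ℝ × ℝ`. -/
def dot2 (x y : ℝ × ℝ) : ℝ := x.1 * y.1 + x.2 * y.2

/-- The positive root `α_j = (cos (πj/n), sin (πj/n))` of the dihedral system `I_n`. -/
def alphaRoot (n : ℕ) (j : ℤ) : ℝ × ℝ :=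
  (Real.cos (Real.pi * j / n), Real.sin (Real.pi * j / n))

/-- The rotation `r_j` of `ℝ²` about the origin by angle `2πj/n`. -/
def rotMap (n : ℕ) (j : ℤ) (v : ℝ × ℝ) : ℝ × ℝ :=
  (Real.cos (2 * Real.pi * j / n) * v.1 - Real.sin (2 * Real.pi * j / n) * v.2,
   Real.sin (2 * Real.pi * j / n) * v.1 + Real.cos (2 * Real.pi * j / n) * v.2)

/-- The reflection `s_j` of `ℝ²`, with matrix
`[[−cos(2πj/n), sin(2πj/n)], [sin(2πj/n), cos(2πj/n)]]`. -/
def reflMap (n : ℕ) (j : ℤ) (v : ℝ × ℝ) : ℝ × ℝ :=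
  (-Real.cos (2 * Real.pi * j / n) * v.1 + Real.sin (2 * Real.pi * j / n) * v.2,
   Real.sin (2 * Real.pi * j / n) * v.1 + Real.cos (2 * Real.pi * j / n) * v.2)

/-- `ρ_j(x,y) = ⟨x, y − r_j.y⟩`. -/
def rhoJ (n : ℕ) (j : ℤ) (x y : ℝ × ℝ) : ℝ := dot2 x (y - rotMap n j y)

/-- `σ_j(x,y) = ⟨x, y − s_j.y⟩`. -/
def sigmaJ (n : ℕ) (j : ℤ) (x y : ℝ × ℝ) : ℝ := dot2 x (y - reflMap n j y)

/-- The closed Weyl chamber `C̄ = {x : ⟨α_0,x⟩ ≥ 0 and ⟨α_{n−1},x⟩ ≥ 0}`. -/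
def chamber (n : ℕ) : Set (ℝ × ℝ) :=
  {x | 0 ≤ dot2 (alphaRoot n 0) x ∧ 0 ≤ dot2 (alphaRoot n ((n : ℤ) - 1)) x}

/-- The rotation `r̃` about the origin by angle `π/2 − π/n`. -/
def rtilde (n : ℕ) (v : ℝ × ℝ) : ℝ × ℝ :=
  (Real.sin (Real.pi / n) * v.1 - Real.cos (Real.pi / n) * v.2,
   Real.cos (Real.pi / n) * v.1 + Real.sin (Real.pi / n) * v.2)

/-!
For `k = j` the vector `s_k.y − r_j.y` is horizontal, and for `k = −j` it is a multiple of `y₁`.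
So `ρ_j − σ_k = ⟨x, s_k.y − r_j.y⟩` factors as a first coordinate (of `x`, resp. `y`), which is
nonnegative on `C̄`, times `cos ψ · z₁ + sin ψ · z₂` at the other vector. Choosing `k = j` when
`2j ≤ n` and `k = n − j` otherwise puts `ψ` in `[0, π − π/n]`, and such functionals are
nonnegative on `C̄`, the cone spanned by the directions of angles `π/2 − π/n` and `π/2`.
-/

theorem mem_chamber_iff {n : ℕ} (hn : n ≠ 0) {z : ℝ × ℝ} :
    z ∈ chamber n ↔ 0 ≤ z.1 ∧ 0 ≤ sin (π / n) * z.2 - cos (π / n) * z.1 := by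
  have hangle : π * (((n : ℤ) - 1 : ℤ) : ℝ) / n = π - π / n := by
    push_cast
    field_simp
  simp only [chamber, dot2, alphaRoot, Set.mem_ofPred_eq, hangle, cos_pi_sub, sin_pi_sub,
    Int.cast_zero, mul_zero, zero_div, cos_zero, sin_zero, one_mul, zero_mul, add_zero]
  constructor <;> rintro ⟨h₁, h₂⟩ <;> exact ⟨h₁, by linarith⟩

theorem dot2_nonneg_of_mem_chamber {n : ℕ} (hn : 2 ≤ n) {ψ : ℝ} (hψ₀ : 0 ≤ ψ)
    (hψ : ψ ≤ π - π / n) {z : ℝ × ℝ} (hz : z ∈ chamber n) : 0 ≤ dot2 (cos ψ, sin ψ) z := by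
  obtain ⟨hz₁, hz₂⟩ := (mem_chamber_iff (by omega)).1 hz
  set p := π / n
  have hp₀ : 0 < p := div_pos pi_pos (by positivity)
  have hp : p < π := div_lt_self pi_pos (by exact_mod_cast (by omega : 1 < n))
  have hsin_p : 0 < sin p := sin_pos_of_pos_of_lt_pi hp₀ hp
  have hsin_ψ : 0 ≤ sin ψ := sin_nonneg_of_nonneg_of_le_pi hψ₀ (by linarith)
  have hsin_ψp : 0 ≤ sin (ψ + p) := sin_nonneg_of_nonneg_of_le_pi (by linarith) (by linarith)
  have hdecomp : sin p * dot2 (cos ψ, sin ψ) z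
      = sin (ψ + p) * z.1 + sin ψ * (sin p * z.2 - cos p * z.1) := by
    rw [sin_add, dot2]
    ring
  refine nonneg_of_mul_nonneg_right ?_ hsin_p
  rw [hdecomp]
  positivity

theorem rhoJ_sub_sigmaJ_self (n : ℕ) (j : ℤ) (x y : ℝ × ℝ) :
    rhoJ n j x y - sigmaJ n j x y
      = 2 * x.1 * dot2 (cos (π - 2 * π * j / n), sin (π - 2 * π * j / n)) y := by
  simp only [rhoJ, sigmaJ, dot2, rotMap, reflMap, Prod.fst_sub, Prod.snd_sub, cos_pi_sub,
    sin_pi_sub]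
  ring

theorem rhoJ_sub_sigmaJ_sub {n : ℕ} (hn : n ≠ 0) (j : ℤ) (x y : ℝ × ℝ) :
    rhoJ n j x y - sigmaJ n (n - j) x y
      = 2 * y.1 * dot2 (cos (2 * π * j / n - π), sin (2 * π * j / n - π)) x := by
  have hangle : 2 * π * (((n : ℤ) - j : ℤ) : ℝ) / n = 2 * π - 2 * π * j / n := by
    push_cast
    field_simp
  simp only [rhoJ, sigmaJ, dot2, rotMap, reflMap, Prod.fst_sub, Prod.snd_sub, hangle,
    cos_two_pi_sub, sin_two_pi_sub, cos_sub_pi, sin_sub_pi]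
  ring

/-- For each `j ∈ ℤ/nℤ`, `j ≠ 0`, there exists `k ∈ ℤ/nℤ` such that
`ρ_j(x,y) ≥ σ_k(x,y)` for all `x, y` in the closed Weyl chamber. -/
theorem rho_ge_sigma (n : ℕ) (hn : 3 ≤ n) (j : ℕ) (hj0 : j ≠ 0) (hjn : j < n) :
    ∃ k < n, ∀ x ∈ chamber n, ∀ y ∈ chamber n, sigmaJ n k x y ≤ rhoJ n j x y := by
  have hn₀ : (0 : ℝ) < n := by positivity
  have hj₁ : (1 : ℝ) ≤ j := by exact_mod_cast Nat.one_le_iff_ne_zero.2 hj0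
  have hjn' : (j : ℝ) + 1 ≤ n := by exact_mod_cast hjn
  rcases le_or_gt (2 * j) n with hle | hgt
  · have hle' : 2 * (j : ℝ) ≤ n := by exact_mod_cast hle
    refine ⟨j, hjn, fun x hx y hy => ?_⟩
    have hψ := dot2_nonneg_of_mem_chamber (n := n) (ψ := π - 2 * π * j / n) (by omega)
      (by rw [sub_nonneg, div_le_iff₀ hn₀]; nlinarith [pi_pos])
      (by rw [sub_le_sub_iff_left, div_le_div_iff_of_pos_right hn₀]; nlinarith [pi_pos]) hy
    have hx₁ := ((mem_chamber_iff (by omega)).1 hx).1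
    have hdiff := rhoJ_sub_sigmaJ_self n j x y
    push_cast at hdiff
    linarith [mul_nonneg (mul_nonneg zero_le_two hx₁) hψ]
  · have hgt' : (n : ℝ) < 2 * j := by exact_mod_cast hgt
    refine ⟨n - j, by omega, fun x hx y hy => ?_⟩
    have hψ := dot2_nonneg_of_mem_chamber (n := n) (ψ := 2 * π * j / n - π) (by omega)
      (by rw [sub_nonneg, le_div_iff₀ hn₀]; nlinarith [pi_pos])
      (by rw [sub_le_iff_le_add, div_le_iff₀ hn₀]; field_simp; nlinarith [pi_pos]) hx
    have hy₁ := ((mem_chamber_iff (by omega)).1 hy).1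
    have hdiff := rhoJ_sub_sigmaJ_sub (by omega : n ≠ 0) j x y
    push_cast [Nat.cast_sub hjn.le] at hdiff ⊢
    linarith [mul_nonneg (mul_nonneg zero_le_two hy₁) hψ]
end
end

section
/- For every integer k with 0 ≤ k ≤ n−1 and all x, y ∈ ℝ², one has e_k(ρ_0, ρ_1, …, ρ_{n−1}) = e_k(σ_0, σ_1, …, σ_{n−1}), where ρ_j = ρ_j(x,y) and σ_j = σ_j(x,y); moreover e_n(ρ_0, …, ρ_{n−1}) = 0 and e_n(σ_0, …, σ_{n−1}) = ∏_{j∈ℤ/nℤ} σ_j. -/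
open Real Finset

noncomputable section

/-- The elementary symmetric polynomial of degree `k` of the `n` numbers `f 0, …, f (n−1)`:
`e_0 = 1` and `e_k = ∑_{j_1 < … < j_k} f j_1 ⋯ f j_k`. -/
def esymmR (n k : ℕ) (f : ℕ → ℝ) : ℝ :=
  ∑ A ∈ (Finset.range n).powersetCard k, ∏ j ∈ A, f j

/-! Identify `ℝ²` with `ℂ` and let `ζ = exp (2πi/n)`. Then `ρ_j = ⟨x,y⟩ - Re (x̄ y ζ^j)` and
`σ_j = ⟨x,y⟩ - Re (-x y ζ^j)`, where `|x̄ y| = |-x y|`. Writing `Re (c ζ^j) = (c ζ^j + c̄ ζ⁻ʲ) / 2`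
and expanding, the power sum `∑_j (P - Re (c ζ^j))^m` with `m < n` keeps only the monomials
`(c ζ^j)^p (c̄ ζ⁻ʲ)^p` (all others average to zero over `j`), so it depends on `c` only through
`|c|`. Hence the `ρ_j` and the `σ_j` have the same power sums of degree `< n`, and by Newton's
identities the same elementary symmetric functions of degree `< n`. In degree `n`, `ρ_0 = 0`. -/

theorem MvPolynomial.aeval_esymm_eq_of_sum_pow_eq {σ K : Type*} [Fintype σ] [Field K]
    [CharZero K] {z w : σ → K} {k : ℕ} (h : ∀ m ∈ Icc 1 k, ∑ i, z i ^ m = ∑ i, w i ^ m) :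
    aeval z (esymm σ K k) = aeval w (esymm σ K k) := by
  induction k using Nat.strong_induction_on with
  | _ k ih =>
  rcases Nat.eq_zero_or_pos k with rfl | hk
  · simp
  have newton (v : σ → K) := congrArg (aeval v) (mul_esymm_eq_sum σ K k)
  simp only [map_mul, map_natCast, map_sum, map_pow, map_neg, map_one, psum, aeval_X] at newton
  refine mul_left_cancel₀ (Nat.cast_ne_zero.2 hk.ne' : (k : K) ≠ 0) ?_
  rw [newton z, newton w]
  congr 1
  refine sum_congr rfl fun a ha => ?_
  obtain ⟨hsum, hlt⟩ : a.1 + a.2 = k ∧ a.1 < k := by simpa using ha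
  rw [ih a.1 hlt fun m hm => h m (by simp at hm ⊢; omega), h a.2 (by simp; omega)]

theorem Finset.sum_powersetCard_prod_eq_of_sum_pow_eq {ι K : Type*} [Field K] [CharZero K]
    {s : Finset ι} {z w : ι → K} {k : ℕ}
    (h : ∀ m ∈ Icc 1 k, ∑ i ∈ s, z i ^ m = ∑ i ∈ s, w i ^ m) :
    ∑ A ∈ s.powersetCard k, ∏ i ∈ A, z i = ∑ A ∈ s.powersetCard k, ∏ i ∈ A, w i := by
  have key := MvPolynomial.aeval_esymm_eq_of_sum_pow_eq (σ := s) (z := fun i => z i)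
    (w := fun i => w i) fun m hm => by
      simpa only [sum_coe_sort s (z · ^ m), sum_coe_sort s (w · ^ m)] using h m hm
  rw [MvPolynomial.aeval_esymm_eq_multiset_esymm, MvPolynomial.aeval_esymm_eq_multiset_esymm,
    univ_eq_attach, attach_val] at key
  erw [Multiset.attach_map_val' _ z, Multiset.attach_map_val' _ w] at key
  simpa only [esymm_map_val] using key

theorem sum_add_pow_eq_of_sum_pow_eq {ι R : Type*} [CommSemiring R] {s : Finset ι}
    {w w' : ι → R} {m : ℕ} (h : ∀ i ≤ m, ∑ j ∈ s, w j ^ i = ∑ j ∈ s, w' j ^ i) (c : R) :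
    ∑ j ∈ s, (w j + c) ^ m = ∑ j ∈ s, (w' j + c) ^ m := by
  simp only [add_pow, sum_comm (s := s), ← sum_mul]
  exact sum_congr rfl fun i hi => by rw [h i (Nat.lt_succ_iff.1 (mem_range.1 hi))]

theorem sum_range_mul_pow_add_mul_pow_pow {R : Type*} [CommSemiring R] (a b ζ η : R) (n i : ℕ) :
    ∑ j ∈ range n, (a * ζ ^ j + b * η ^ j) ^ i
      = ∑ p ∈ range (i + 1), a ^ p * b ^ (i - p) * i.choose p *
          ∑ j ∈ range n, (ζ ^ p * η ^ (i - p)) ^ j := by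
  simp only [add_pow, sum_comm (s := range n), mul_sum]
  exact sum_congr rfl fun p _ => sum_congr rfl fun j _ => by ring

namespace IsPrimitiveRoot

variable {K : Type*} [Field K] {ζ : K} {n : ℕ}

theorem sum_pow_mul_inv_pow_pow_eq_zero (hζ : IsPrimitiveRoot ζ n) {p q : ℕ} (hpq : p + q < n)
    (hne : p ≠ q) : ∑ j ∈ range n, (ζ ^ p * ζ⁻¹ ^ q) ^ j = 0 := by
  have hx : ζ ^ p * ζ⁻¹ ^ q = ζ ^ ((p : ℤ) - q) := by
    rw [zpow_sub₀ (hζ.ne_zero (by omega)), zpow_natCast, zpow_natCast, div_eq_mul_inv, inv_pow]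
  have hne_one : ζ ^ ((p : ℤ) - q) ≠ 1 := by
    rw [Ne, hζ.zpow_eq_one_iff_dvd]
    intro hdvd
    have := Int.eq_zero_of_abs_lt_dvd hdvd (by rw [abs_lt]; omega)
    omega
  have hpow : (ζ ^ ((p : ℤ) - q)) ^ n = 1 := by
    rw [← zpow_natCast, ← zpow_mul, mul_comm, zpow_mul, zpow_natCast, hζ.pow_eq_one, one_zpow]
  have hgeom := mul_neg_geom_sum (ζ ^ ((p : ℤ) - q)) n
  rw [hpow, sub_self] at hgeom
  rw [hx]
  exact (mul_eq_zero.1 hgeom).resolve_left (sub_ne_zero.2 hne_one.symm)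

theorem sum_mul_pow_add_mul_inv_pow_pow_eq (hζ : IsPrimitiveRoot ζ n) {i : ℕ} (hi : i < n)
    {a b a' b' : K} (hab : a * b = a' * b') :
    ∑ j ∈ range n, (a * ζ ^ j + b * ζ⁻¹ ^ j) ^ i
      = ∑ j ∈ range n, (a' * ζ ^ j + b' * ζ⁻¹ ^ j) ^ i := by
  rw [sum_range_mul_pow_add_mul_pow_pow, sum_range_mul_pow_add_mul_pow_pow]
  refine sum_congr rfl fun p hp => ?_
  have hp : p ≤ i := Nat.lt_succ_iff.1 (mem_range.1 hp)
  by_cases hbalanced : p = i - p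
  · rw [← hbalanced, ← mul_pow a, ← mul_pow a', hab]
  · rw [hζ.sum_pow_mul_inv_pow_pow_eq_zero (by omega) hbalanced, mul_zero, mul_zero]

end IsPrimitiveRoot

open ComplexConjugate in
theorem IsPrimitiveRoot.sum_sub_re_mul_pow_pow_eq {ζ : ℂ} {n m : ℕ} (hζ : IsPrimitiveRoot ζ n)
    (hm : m < n) (P : ℝ) {c c' : ℂ} (hc : ‖c‖ = ‖c'‖) :
    ∑ j ∈ range n, (P - (c * ζ ^ j).re) ^ m = ∑ j ∈ range n, (P - (c' * ζ ^ j).re) ^ m := by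
  have hconj : conj ζ = ζ⁻¹ := (Complex.inv_eq_conj (hζ.norm'_eq_one (by omega))).symm
  have hcast (c : ℂ) (j : ℕ) : ((P - (c * ζ ^ j).re : ℝ) : ℂ)
      = (-c / 2 * ζ ^ j + -conj c / 2 * ζ⁻¹ ^ j) + P := by
    rw [Complex.ofReal_sub, Complex.re_eq_add_conj, map_mul, map_pow, hconj]
    ring
  have hnormSq : c * conj c = c' * conj c' := by
    rw [Complex.mul_conj', Complex.mul_conj', hc]
  apply Complex.ofReal_injective
  push_cast [hcast]
  refine sum_add_pow_eq_of_sum_pow_eq (fun i hi => ?_) _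
  exact hζ.sum_mul_pow_add_mul_inv_pow_pow_eq (by omega) (by linear_combination hnormSq / 4)

theorem Complex.exp_two_pi_mul_I_div_pow (n j : ℕ) :
    exp (2 * π * I / n) ^ j = Real.cos (2 * π * j / n) + Real.sin (2 * π * j / n) * I := by
  rw [← exp_nat_mul, ofReal_cos, ofReal_sin, ← exp_mul_I]
  congr 1
  push_cast
  ring

open Complex ComplexConjugate in
theorem rhoJ_eq_sub_re (n j : ℕ) (x y : ℝ × ℝ) :
    rhoJ n j x y = dot2 x y
      - (conj (equivRealProd.symm x) * equivRealProd.symm y * exp (2 * π * I / n) ^ j).re := by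
  simp only [exp_two_pi_mul_I_div_pow, equivRealProd_symm_apply, rhoJ, dot2, rotMap, mul_re,
    mul_im, add_re, add_im, conj_re, conj_im, ofReal_re, ofReal_im, I_re, I_im, Int.cast_natCast,
    Prod.fst_sub, Prod.snd_sub]
  ring

open Complex in
theorem sigmaJ_eq_sub_re (n j : ℕ) (x y : ℝ × ℝ) :
    sigmaJ n j x y = dot2 x y
      - (-(equivRealProd.symm x * equivRealProd.symm y) * exp (2 * π * I / n) ^ j).re := by
  simp only [exp_two_pi_mul_I_div_pow, equivRealProd_symm_apply, sigmaJ, dot2, reflMap, mul_re,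
    mul_im, add_re, add_im, neg_re, neg_im, ofReal_re, ofReal_im, I_re, I_im, Int.cast_natCast,
    Prod.fst_sub, Prod.snd_sub]
  ring

theorem esymmR_self (n : ℕ) (f : ℕ → ℝ) : esymmR n n f = ∏ j ∈ range n, f j := by
  have h := powersetCard_self (range n)
  rw [card_range] at h
  rw [esymmR, h, sum_singleton]

/-- For `0 ≤ k ≤ n−1`, `e_k(ρ_0, …, ρ_{n−1}) = e_k(σ_0, …, σ_{n−1})`; moreover
`e_n(ρ_0, …, ρ_{n−1}) = 0` and `e_n(σ_0, …, σ_{n−1}) = ∏_j σ_j`. -/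
theorem esymm_rho_eq_esymm_sigma (n : ℕ) (hn : 3 ≤ n) (x y : ℝ × ℝ) :
    (∀ k ≤ n - 1,
        esymmR n k (fun j => rhoJ n j x y) = esymmR n k (fun j => sigmaJ n j x y)) ∧
      esymmR n n (fun j => rhoJ n j x y) = 0 ∧
      esymmR n n (fun j => sigmaJ n j x y) = ∏ j ∈ Finset.range n, sigmaJ n j x y := by
  have hζ := Complex.isPrimitiveRoot_exp n (by omega)
  refine ⟨fun k hk => ?_, ?_, esymmR_self n _⟩
  · refine sum_powersetCard_prod_eq_of_sum_pow_eq fun m hm => ?_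
    simp only [rhoJ_eq_sub_re, sigmaJ_eq_sub_re]
    refine hζ.sum_sub_re_mul_pow_pow_eq (by simp only [mem_Icc] at hm; omega) _ ?_
    rw [norm_mul, norm_neg, norm_mul, Complex.norm_conj]
  · rw [esymmR_self]
    exact prod_eq_zero (mem_range.2 (by omega : 0 < n)) (by simp [rhoJ, rotMap, dot2])
end
end
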